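/- arXiv:2402.12123 — 3 statements merged into one kernel-verified Lean document; each statement's English description precedes it below -/
import Mathlib

section
/- Let u be a non-root vertex of a tree T rooted at r, and let π be an Euler tour of the bidirected version of T starting and ending at r, with a 0/1 weight on directed edges such that each vertex of a set Q marks exactly one of its outgoing edges with weight 1. If p is the parent of u, then the number of vertices of Q in the subtree of u equals prefix((u,p)) − prefix((p,u)), where prefix(e) is the sum of weights of all edges up to and including e along π; in particular prefix((u,p)) − prefix((p,u)) ≥ 0. -/
variable {V : Type*} [DecidableEq V]

/-- The prefix sum of the weights along the tour `π` up to and including the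
(unique occurrence of the) directed edge `e`. -/
def prefixSum (w : V × V → ℕ) (π : List (V × V)) (e : V × V) : ℕ :=
  ((π.takeWhile (fun f => decide (f ≠ e))).map w).sum + w e

/-- `π` is an Euler tour of the bidirected version of `G` starting and ending at `r`:
consecutive directed edges are incident, every directed edge of `G` occurs exactly
once, only edges of `G` occur, and the tour starts and ends at `r`. -/
def IsEulerTour (G : SimpleGraph V) [DecidableRel G.Adj] (r : V) (π : List (V × V)) : Prop :=
  π.Chain' (fun e f => e.2 = f.1) ∧
  (∀ e ∈ π, G.Adj e.1 e.2) ∧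
  (∀ e : V × V, G.Adj e.1 e.2 → π.count e = 1) ∧
  π.head?.map Prod.fst = some r ∧
  π.getLast?.map Prod.snd = some r

/-- `p` is the parent of `u` in the tree `G` rooted at `r`. -/
def IsParentOf (G : SimpleGraph V) (r p u : V) : Prop :=
  G.Adj p u ∧ G.dist r u = G.dist r p + 1

/-- The vertex set of the subtree of `u` in the tree `G` rooted at `r`:
the vertices whose path from `r` passes through `u`. -/
def subtreeOf (G : SimpleGraph V) (r u : V) : Set V :=
  {x | G.dist r x = G.dist r u + G.dist u x}

section Aux

open SimpleGraph

variable {G : SimpleGraph V}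

lemma aux_dist_add_of_mem_support (hconn : G.Connected) {a b x : V} (W : G.Walk a b)
    (hW : W.length = G.dist a b) (hx : x ∈ W.support) :
    G.dist a x + G.dist x b = G.dist a b := by
  have h1 : G.dist a x ≤ (W.takeUntil x hx).length := SimpleGraph.dist_le _
  have h2 : G.dist x b ≤ (W.dropUntil x hx).length := SimpleGraph.dist_le _
  have h3 : (W.takeUntil x hx).length + (W.dropUntil x hx).length = W.length := by
    rw [← SimpleGraph.Walk.length_append, Walk.take_spec]
  have h4 := hconn.dist_triangle (u := a) (v := x) (w := b)
  omega

lemma aux_adj_dist_ne (hT : G.IsTree) (r : V) {x y : V} (hxy : G.Adj x y) :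
    G.dist r x ≠ G.dist r y := by
  intro heq
  have hconn := hT.isConnected
  obtain ⟨Px, hPx, hlx⟩ := hconn.exists_path_of_dist r x
  obtain ⟨Py, hPy, hly⟩ := hconn.exists_path_of_dist r y
  have hy : y ∉ Px.support := by
    intro hmem
    have := aux_dist_add_of_mem_support hconn Px hlx hmem
    have h0 : G.dist y x = 0 := by omega
    exact hxy.ne ((hconn.dist_eq_zero_iff).mp h0).symm
  have hyr : y ∉ Px.reverse.support := by rwa [Walk.support_reverse, List.mem_reverse]
  set W : G.Walk r y := (Walk.cons hxy.symm Px.reverse).reverse with hWdef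
  have hWp : W.IsPath := by
    rw [Walk.isPath_reverse_iff, Walk.cons_isPath_iff]
    exact ⟨hPx.reverse, hyr⟩
  have hWl : W.length = G.dist r x + 1 := by
    simp [hWdef, Walk.length_reverse, Walk.length_cons, hlx]
  obtain ⟨P, -, hP⟩ := hT.existsUnique_path r y
  have e1 := hP W hWp
  have e2 := hP Py hPy
  rw [← e2] at e1
  have : W.length = Py.length := by rw [e1]
  omega

lemma aux_parent_unique (hT : G.IsTree) (r : V) {y q u : V} (hy : G.Adj y u) (hq : G.Adj q u)
    (hdy : G.dist r y + 1 = G.dist r u) (hdq : G.dist r q + 1 = G.dist r u) : y = q := by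
  have hconn := hT.isConnected
  obtain ⟨Py, hPy, hly⟩ := hconn.exists_path_of_dist r y
  obtain ⟨Pq, hPq, hlq⟩ := hconn.exists_path_of_dist r q
  have hu1 : u ∉ Py.support := by
    intro hmem
    have := aux_dist_add_of_mem_support hconn Py hly hmem
    have h5 : 1 ≤ G.dist u y := by
      have := (SimpleGraph.dist_eq_one_iff_adj (G := G)).mpr hy.symm
      omega
    omega
  have hu2 : u ∉ Pq.support := by
    intro hmem
    have := aux_dist_add_of_mem_support hconn Pq hlq hmem
    have h5 : 1 ≤ G.dist u q := by
      have := (SimpleGraph.dist_eq_one_iff_adj (G := G)).mpr hq.symm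
      omega
    omega
  set W1 : G.Walk r u := (Walk.cons hy.symm Py.reverse).reverse with hW1
  set W2 : G.Walk r u := (Walk.cons hq.symm Pq.reverse).reverse with hW2
  have hW1p : W1.IsPath := by
    rw [Walk.isPath_reverse_iff, Walk.cons_isPath_iff]
    refine ⟨hPy.reverse, by rwa [Walk.support_reverse, List.mem_reverse]⟩
  have hW2p : W2.IsPath := by
    rw [Walk.isPath_reverse_iff, Walk.cons_isPath_iff]
    refine ⟨hPq.reverse, by rwa [Walk.support_reverse, List.mem_reverse]⟩
  obtain ⟨P, -, hP⟩ := hT.existsUnique_path r u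
  have e : W1 = W2 := by rw [hP W1 hW1p, hP W2 hW2p]
  have e' : (Walk.cons hy.symm Py.reverse) = (Walk.cons hq.symm Pq.reverse) := by
    have := congrArg Walk.reverse e
    simpa [hW1, hW2] using this
  have := congrArg (fun w => w.getVert 1) e'
  simpa [Walk.getVert_cons_succ, Walk.getVert_cons] using this

lemma aux_cross_lemma (hT : G.IsTree) {r u p x y : V} (hpu : G.Adj p u)
    (hdu : G.dist r u = G.dist r p + 1)
    (hx : G.dist r x = G.dist r u + G.dist u x)
    (hy : ¬ G.dist r y = G.dist r u + G.dist u y)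
    (hxy : G.Adj x y) : x = u ∧ y = p := by
  have hconn := hT.isConnected
  have hne := aux_adj_dist_ne hT r hxy
  have h1 : G.dist x y = 1 := SimpleGraph.dist_eq_one_iff_adj.mpr hxy
  have h1' : G.dist y x = 1 := SimpleGraph.dist_eq_one_iff_adj.mpr hxy.symm
  have t1 : G.dist r y ≤ G.dist r x + G.dist x y := hconn.dist_triangle
  have t2 : G.dist r x ≤ G.dist r y + G.dist y x := hconn.dist_triangle
  have t3 : G.dist r y ≤ G.dist r u + G.dist u y := hconn.dist_triangle
  have t4 : G.dist u y ≤ G.dist u x + G.dist x y := hconn.dist_triangle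
  rcases (by omega : G.dist r y = G.dist r x + 1 ∨ G.dist r x = G.dist r y + 1) with hcase | hcase
  · exfalso; omega
  · obtain ⟨Py, hPy, hly⟩ := hconn.exists_path_of_dist r y
    have hxs : x ∉ Py.support := by
      intro hmem
      have := aux_dist_add_of_mem_support hconn Py hly hmem
      omega
    set W : G.Walk r x := (Walk.cons hxy Py.reverse).reverse with hWdef
    have hWp : W.IsPath := by
      rw [Walk.isPath_reverse_iff, Walk.cons_isPath_iff]
      exact ⟨hPy.reverse, by rwa [Walk.support_reverse, List.mem_reverse]⟩
    obtain ⟨P1, hP1, hl1⟩ := hconn.exists_path_of_dist r u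
    obtain ⟨P2, hP2, hl2⟩ := hconn.exists_path_of_dist u x
    set W' : G.Walk r x := P1.append P2 with hW'def
    have hW'l : W'.length = G.dist r x := by
      rw [hW'def, Walk.length_append]; omega
    have hW'p : W'.IsPath := W'.isPath_of_length_eq_dist hW'l
    obtain ⟨P, -, hP⟩ := hT.existsUnique_path r x
    have e : W = W' := by rw [hP W hWp, hP W' hW'p]
    have humem : u ∈ W.support := by
      rw [e, hW'def]
      rw [Walk.mem_support_append_iff]
      left
      exact Walk.end_mem_support _
    have hxu : x = u := by
      rw [hWdef] at humem
      rw [Walk.support_reverse, List.mem_reverse, Walk.support_cons] at humem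
      rcases List.mem_cons.mp humem with h | h
      · exact h.symm
      · exfalso
        rw [Walk.support_reverse, List.mem_reverse] at h
        have := aux_dist_add_of_mem_support hconn Py hly h
        omega
    subst hxu
    refine ⟨rfl, aux_parent_unique hT r hxy.symm hpu ?_ ?_⟩ <;> omega

lemma aux_tails_prop {V : Type*} (P : V → Prop) :
    ∀ (L : List (V × V)), L.Chain' (fun e f => e.2 = f.1) →
      (∀ e ∈ L.head?, P e.1) → (∀ e ∈ L, P e.1 → P e.2) →
      ∀ e ∈ L, P e.1 ∧ P e.2
  | [], _, _, _ => by simp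
  | a :: L, hch, hhd, hstep => by
    replace hch := List.isChain_cons.mp hch
    have ha1 : P a.1 := hhd a rfl
    have ha2 : P a.2 := hstep a List.mem_cons_self ha1
    intro e he
    rcases List.mem_cons.mp he with rfl | he'
    · exact ⟨ha1, ha2⟩
    · refine aux_tails_prop P L hch.2 ?_ (fun f hf => hstep f (List.mem_cons_of_mem _ hf)) e he'
      intro f hf
      rw [← hch.1 f hf]
      exact ha2

lemma aux_takeWhile_middle {α : Type*} (pb : α → Bool) (l₁ l₂ : List α) (x : α)
    (h₁ : ∀ a ∈ l₁, pb a) (h₂ : pb x = false) :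
    (l₁ ++ x :: l₂).takeWhile pb = l₁ := by
  rw [List.takeWhile_append_of_pos h₁, List.takeWhile_cons_of_neg (by simp [h₂]),
    List.append_nil]

lemma aux_nodup_of_count {α : Type*} [BEq α] [LawfulBEq α] (l : List α)
    (h : ∀ e ∈ l, l.count e = 1) : l.Nodup := by
  induction l with
  | nil => simp
  | cons a l ih =>
    have ha := h a List.mem_cons_self
    rw [List.count_cons_self] at ha
    have hal : a ∉ l := by
      intro hma
      have : 0 < l.count a := List.count_pos_iff.mpr hma
      omega
    refine List.nodup_cons.mpr ⟨hal, ih ?_⟩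
    intro e he
    have h2 := h e (List.mem_cons_of_mem a he)
    rw [List.count_cons] at h2
    by_cases hea : a = e
    · subst hea; exact absurd he hal
    · simpa [hea] using h2

lemma aux_exists_split {α : Type*} [DecidableEq α] (l : List α) (x : α) (hx : x ∈ l) :
    ∃ l₂, l = l.takeWhile (fun f => decide (f ≠ x)) ++ x :: l₂ := by
  induction l with
  | nil => cases hx
  | cons a l ih =>
    by_cases hax : a = x
    · subst hax
      exact ⟨l, by rw [List.takeWhile_cons_of_neg (by simp), List.nil_append]⟩
    · have hx' : x ∈ l := by
        rcases List.mem_cons.mp hx with h | h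
        · exact absurd h.symm hax
        · exact h
      obtain ⟨l₂, h⟩ := ih hx'
      refine ⟨l₂, ?_⟩
      rw [List.takeWhile_cons_of_pos (by simp [hax]), List.cons_append]
      exact congrArg (a :: ·) h

end Aux

/-- Euler tour subtree counting: for a non-root vertex `u` with parent `p`, the number
of vertices of `Q` in the subtree of `u` equals `prefix((u,p)) − prefix((p,u))`;
in particular the latter difference is nonnegative. -/
theorem euler_tour_subtree_count
    [Fintype V] (G : SimpleGraph V) [DecidableRel G.Adj] (hT : G.IsTree) (r : V)
    (π : List (V × V)) (hπ : IsEulerTour G r π)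
    (Q : Set V) (marked : Set (V × V))
    (hmark₁ : ∀ q ∈ Q, ∃! v : V, (q, v) ∈ marked)
    (hmark₂ : ∀ e ∈ marked, e.1 ∈ Q ∧ G.Adj e.1 e.2)
    (w : V × V → ℕ)
    (hw₁ : ∀ e ∈ marked, w e = 1) (hw₀ : ∀ e ∉ marked, w e = 0)
    (u p : V) (hu : u ≠ r) (hp : IsParentOf G r p u) :
    prefixSum w π (u, p) = prefixSum w π (p, u) + (Q ∩ subtreeOf G r u).ncard := by
  classical
  obtain ⟨hchain, hadj, hcount, hhead, -⟩ := hπ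
  obtain ⟨hadj_pu, hdist⟩ := hp
  have hconn := hT.isConnected
  set S : Set V := subtreeOf G r u with hSdef
  have hmemS : ∀ x, x ∈ S ↔ G.dist r x = G.dist r u + G.dist u x := fun x => Iff.rfl
  have huS : u ∈ S := by rw [hmemS]; simp
  have hrS : r ∉ S := by
    rw [hmemS]
    intro h
    rw [SimpleGraph.dist_self] at h
    have h2 : G.dist r u = 0 := by omega
    exact hu ((hconn.dist_eq_zero_iff).mp h2).symm
  have hpS : p ∉ S := by
    rw [hmemS]
    have : G.dist u p = 1 := SimpleGraph.dist_eq_one_iff_adj.mpr hadj_pu.symm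
    omega
  have hpne : p ≠ u := hadj_pu.ne
  have hcross : ∀ x y : V, x ∈ S → y ∉ S → G.Adj x y → x = u ∧ y = p := by
    intro x y hx hy hxy
    exact aux_cross_lemma hT hadj_pu hdist ((hmemS x).mp hx) (fun h => hy ((hmemS y).mpr h)) hxy
  have hmem_pu : ((p, u) : V × V) ∈ π := by
    rw [← List.count_pos_iff]
    rw [hcount _ hadj_pu]
    omega
  have hmem_up : ((u, p) : V × V) ∈ π := by
    rw [← List.count_pos_iff]
    rw [hcount _ hadj_pu.symm]
    omega
  -- first split of the tour at (p,u)
  obtain ⟨E, hsplit1⟩ := aux_exists_split π (p, u) hmem_pu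
  set A := π.takeWhile (fun f => decide (f ≠ ((p, u) : V × V))) with hA
  have hAmem : ∀ e ∈ A, e ≠ (p, u) := by
    intro e he
    have := List.mem_takeWhile_imp (hA ▸ he)
    simpa using this
  have hAπ : ∀ e ∈ A, e ∈ π := by
    intro e he
    rw [hsplit1]
    exact List.mem_append_left _ he
  -- chain decomposition
  have hchain1 := hchain
  rw [hsplit1] at hchain1
  obtain ⟨chA, chR, -⟩ := List.isChain_append.mp hchain1
  rw [List.isChain_cons] at chR
  obtain ⟨hheadE, chE⟩ := chR
  -- all tails/heads in A avoid S
  have hAheadr : ∀ e ∈ A.head?, e.1 = r := by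
    intro e he
    cases hA' : A with
    | nil => rw [hA'] at he; simp at he
    | cons a A' =>
      rw [hA'] at he
      simp only [List.head?_cons, Option.mem_def, Option.some.injEq] at he
      subst he
      rw [hsplit1, hA'] at hhead
      simp only [List.cons_append, List.head?_cons, Option.map_some] at hhead
      exact Option.some.inj hhead
  have hAnot : ∀ e ∈ A, e.1 ∉ S ∧ e.2 ∉ S := by
    refine aux_tails_prop (fun v => v ∉ S) A chA ?_ ?_
    · intro e he
      rw [hAheadr e he]
      exact hrS
    · intro e he h1
      by_contra h2
      have := hcross e.2 e.1 h2 h1 (hadj e (hAπ e he)).symm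
      exact hAmem e he (Prod.ext this.2 this.1)
  have hup_ne_pu : ((u, p) : V × V) ≠ (p, u) := by
    intro h
    exact hpne (congrArg Prod.fst h).symm
  have hmem_upE : ((u, p) : V × V) ∈ E := by
    have h := hmem_up
    rw [hsplit1] at h
    rcases List.mem_append.mp h with h | h
    · exact absurd ((hAnot _ h).1) (by simpa using huS)
    · rcases List.mem_cons.mp h with h | h
      · exact absurd h hup_ne_pu
      · exact h
  -- second split at (u,p)
  obtain ⟨C, hsplit2⟩ := aux_exists_split E (u, p) hmem_upE
  set B := E.takeWhile (fun f => decide (f ≠ ((u, p) : V × V))) with hB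
  have hBmem : ∀ e ∈ B, e ≠ (u, p) := by
    intro e he
    have := List.mem_takeWhile_imp (hB ▸ he)
    simpa using this
  have hsplitπ : π = A ++ (p, u) :: (B ++ (u, p) :: C) := by
    rw [hsplit1, hsplit2]
  have hBπ : ∀ e ∈ B, e ∈ π := by
    intro e he
    rw [hsplitπ]
    exact List.mem_append_right _ (List.mem_cons_of_mem _ (List.mem_append_left _ he))
  have hCπ : ∀ e ∈ C, e ∈ π := by
    intro e he
    rw [hsplitπ]
    exact List.mem_append_right _ (List.mem_cons_of_mem _
      (List.mem_append_right _ (List.mem_cons_of_mem _ he)))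
  -- chains on B and C
  have chE' := chE
  rw [hsplit2] at chE'
  obtain ⟨chB, chUC, -⟩ := List.isChain_append.mp chE'
  rw [List.isChain_cons] at chUC
  obtain ⟨hheadC, chC⟩ := chUC
  -- tails in B lie in S
  have hBin : ∀ e ∈ B, e.1 ∈ S ∧ e.2 ∈ S := by
    refine aux_tails_prop (fun v => v ∈ S) B chB ?_ ?_
    · intro e he
      have hE : E.head? = some e := by
        cases hB' : B with
        | nil => rw [hB'] at he; simp at he
        | cons b B' =>
          rw [hB'] at he
          simp only [List.head?_cons, Option.mem_def, Option.some.injEq] at he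
          subst he
          rw [hsplit2, hB']
          rfl
      have := hheadE e hE
      rw [← this]
      exact huS
    · intro e he h1
      by_contra h2
      have := hcross e.1 e.2 h1 h2 (hadj e (hBπ e he))
      exact hBmem e he (Prod.ext this.1 this.2)
  -- (p,u) does not occur in C
  have hcpu := hcount (p, u) hadj_pu
  rw [hsplitπ] at hcpu
  have hpu_notC : ((p, u) : V × V) ∉ C := by
    intro hC
    have h1 : 0 < List.count ((p, u) : V × V) C := List.count_pos_iff.mpr hC
    rw [List.count_append, List.count_cons_self, List.count_append, List.count_cons] at hcpu
    omega
  -- tails in C avoid S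
  have hCnot : ∀ e ∈ C, e.1 ∉ S ∧ e.2 ∉ S := by
    refine aux_tails_prop (fun v => v ∉ S) C chC ?_ ?_
    · intro e he
      have := hheadC e he
      rw [← this]
      exact hpS
    · intro e he h1
      by_contra h2
      have := hcross e.2 e.1 h2 h1 (hadj e (hCπ e he)).symm
      have he' : e = (p, u) := Prod.ext this.2 this.1
      rw [he'] at he
      exact hpu_notC he
  -- the tour has no duplicates
  have hnodup : π.Nodup := aux_nodup_of_count π (fun e he => hcount e (hadj e he))
  -- the segment of the tour inside the subtree
  set K : List (V × V) := B ++ [(u, p)] with hK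
  have hKsub : List.Sublist K π := by
    rw [hsplitπ, hK]
    exact List.Sublist.trans
      (List.Sublist.cons _ (List.Sublist.append_left ((List.nil_sublist C).cons₂ _) B))
      (List.sublist_append_right A _)
  have hKnodup : K.Nodup := hnodup.sublist hKsub
  have hKmem : ∀ e : V × V, e ∈ K ↔ (G.Adj e.1 e.2 ∧ e.1 ∈ S) := by
    intro e
    constructor
    · intro he
      rcases List.mem_append.mp he with h | h
      · exact ⟨hadj e (hBπ e h), (hBin e h).1⟩
      · rw [List.mem_singleton] at h
        subst h
        exact ⟨hadj_pu.symm, huS⟩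
    · rintro ⟨h1, h2⟩
      have heπ : e ∈ π := by
        rw [← List.count_pos_iff, hcount e h1]
        omega
      rw [hsplitπ] at heπ
      rcases List.mem_append.mp heπ with h | h
      · exact absurd h2 (hAnot e h).1
      · rcases List.mem_cons.mp h with h | h
        · subst h
          exact absurd h2 hpS
        · rcases List.mem_append.mp h with h | h
          · exact List.mem_append_left _ h
          · rcases List.mem_cons.mp h with h | h
            · subst h
              exact List.mem_append_right _ (List.mem_singleton.mpr rfl)
            · exact absurd h2 (hCnot e h).1
  -- prefix sum computations
  have hpre1 : prefixSum w π (p, u) = (A.map w).sum + w (p, u) := by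
    rw [prefixSum, ← hA]
  have htw2 : π.takeWhile (fun f => decide (f ≠ ((u, p) : V × V))) = A ++ (p, u) :: B := by
    have hform : π = (A ++ (p, u) :: B) ++ ((u, p) :: C) := by
      rw [hsplitπ]
      simp
    rw [hform]
    apply aux_takeWhile_middle
    · intro a ha
      simp only [decide_eq_true_eq]
      rcases List.mem_append.mp ha with h | h
      · intro hEq
        exact (hAnot a h).1 (by rw [hEq]; exact huS)
      · rcases List.mem_cons.mp h with h | h
        · intro hq
          rw [hq] at h
          exact hup_ne_pu h
        · exact hBmem a h
    · simp
  have hpre2 : prefixSum w π (u, p) = ((A ++ (p, u) :: B).map w).sum + w (u, p) := by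
    rw [prefixSum, htw2]
  -- counting
  set F : Finset (V × V) := K.toFinset.filter (fun e => e ∈ marked) with hF
  have hsumK : (K.map w).sum = F.card := by
    rw [← List.sum_toFinset w hKnodup]
    rw [← Finset.sum_filter_add_sum_filter_not K.toFinset (fun e => e ∈ marked) w]
    have h1 : ∑ e ∈ F, w e = F.card := by
      rw [Finset.sum_congr rfl (fun e he => hw₁ e (Finset.mem_filter.mp he).2)]
      simp [hF]
    have h2 : ∑ e ∈ K.toFinset.filter (fun e => ¬ e ∈ marked), w e = 0 := by
      refine Finset.sum_eq_zero ?_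
      intro e he
      exact hw₀ e (Finset.mem_filter.mp he).2
    rw [← hF] at *
    omega
  have himg : (Q ∩ S) = ↑(F.image Prod.fst) := by
    ext q
    simp only [Finset.coe_image, Set.mem_image, Finset.mem_coe, Set.mem_inter_iff]
    constructor
    · rintro ⟨hq, hqS⟩
      obtain ⟨v, hv, -⟩ := hmark₁ q hq
      refine ⟨(q, v), ?_, rfl⟩
      rw [hF, Finset.mem_filter, List.mem_toFinset, hKmem]
      exact ⟨⟨(hmark₂ _ hv).2, hqS⟩, hv⟩
    · rintro ⟨e, he, rfl⟩
      rw [hF, Finset.mem_filter, List.mem_toFinset, hKmem] at he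
      exact ⟨(hmark₂ e he.2).1, he.1.2⟩
  have hinj : Set.InjOn Prod.fst (F : Set (V × V)) := by
    intro e₁ h₁ e₂ h₂ hEq
    rw [hF, Finset.coe_filter, Set.mem_setOf_eq] at h₁ h₂
    have hq₁ : e₁.1 ∈ Q := (hmark₂ e₁ h₁.2).1
    obtain ⟨v, -, huniq⟩ := hmark₁ e₁.1 hq₁
    have hv₁ : e₁.2 = v := huniq e₁.2 (by simpa using h₁.2)
    have hv₂ : e₂.2 = v := huniq e₂.2 (by rw [hEq]; simpa using h₂.2)
    exact Prod.ext hEq (hv₁.trans hv₂.symm)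
  have hncard : (Q ∩ S).ncard = F.card := by
    rw [himg, Set.ncard_coe_finset]
    exact Finset.card_image_of_injOn (by simpa using hinj)
  rw [hpre1, hpre2, hncard]
  have hKsum : (K.map w).sum = (B.map w).sum + w (u, p) := by
    rw [hK]
    simp
  rw [hsumK] at hKsum
  simp only [List.map_append, List.sum_append, List.map_cons, List.sum_cons]
  omega
end

section
/- Under the Euler tour setup, the subtree of a non-root vertex u with respect to root r contains no vertex of Q if and only if prefix((u,v)) − prefix((v,u)) = 0 for all neighbors v of u; and if the subtree of u contains at least one vertex of Q, then a neighbor v of u is the parent of u if and only if prefix((u,v)) − prefix((v,u)) > 0. -/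
variable {V : Type*} [DecidableEq V]

open SimpleGraph

namespace EulerAux

variable {G : SimpleGraph V}

lemma walk_length_pos {x y : V} (w : G.Walk x y) (h : x ≠ y) : 0 < w.length := by
  cases w with
  | nil => exact absurd rfl h
  | cons h' p => simp

lemma dist_adj_le (hc : G.Connected) {a b : V} (h : G.Adj a b) (r : V) :
    G.dist r b ≤ G.dist r a + 1 := by
  have h2 := hc.dist_triangle (u := r) (v := a) (w := b)
  rwa [(dist_eq_one_iff_adj).mpr h] at h2

lemma exists_pred (hc : G.Connected) {x y : V} (h : x ≠ y) :
    ∃ c, G.Adj c y ∧ G.dist x c + 1 = G.dist x y := by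
  obtain ⟨p, hlen⟩ := hc.exists_walk_length_eq_dist y x
  cases p with
  | nil => exact absurd rfl (Ne.symm h)
  | @cons _ c _ h' t =>
    refine ⟨c, h'.symm, ?_⟩
    have h1 : G.dist x c ≤ t.length := by
      have := SimpleGraph.dist_le t.reverse
      simpa using this
    have h2 : G.dist x y ≤ G.dist x c + 1 := dist_adj_le hc h'.symm x
    have h3 : t.length + 1 = G.dist y x := by simpa using hlen
    rw [SimpleGraph.dist_comm (u := y)] at h3
    omega

lemma mem_support_dist_le (hc : G.Connected) {r a b : V} (p : G.Walk r a) (hb : b ∈ p.support) :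
    G.dist r b ≤ p.length := by
  have h3 := SimpleGraph.dist_le (p.takeUntil b hb)
  have h4 : (p.takeUntil b hb).length + (p.dropUntil b hb).length = p.length := by
    rw [← SimpleGraph.Walk.length_append, p.take_spec hb]
  omega

lemma adj_dist_cases (hT : G.IsTree) (r : V) {a b : V} (hab : G.Adj a b) :
    G.dist r a + 1 = G.dist r b ∨ G.dist r b + 1 = G.dist r a := by
  have hc := hT.isConnected
  by_contra hcon
  push_neg at hcon
  have h1 : G.dist r b ≤ G.dist r a + 1 := dist_adj_le hc hab r
  have h2 : G.dist r a ≤ G.dist r b + 1 := dist_adj_le hc hab.symm r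
  have heq : G.dist r a = G.dist r b := by omega
  obtain ⟨p, hp, hplen⟩ := hc.exists_path_of_dist r a
  have hbp : b ∉ p.support := by
    intro hbs
    have h3 := mem_support_dist_le hc p hbs
    have h4 := mem_support_dist_le hc (p.takeUntil b hbs)
      (SimpleGraph.Walk.end_mem_support _)
    have h5 := SimpleGraph.dist_le (p.takeUntil b hbs)
    have h6 : (p.takeUntil b hbs).length + (p.dropUntil b hbs).length = p.length := by
      rw [← SimpleGraph.Walk.length_append, p.take_spec hbs]
    have h7 : 0 < (p.dropUntil b hbs).length := walk_length_pos _ hab.ne'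
    omega
  have hp' : (p.concat hab).IsPath := by
    rw [← SimpleGraph.Walk.isPath_reverse_iff, SimpleGraph.Walk.reverse_concat]
    exact (hp.reverse).cons (by simpa using hbp)
  obtain ⟨q, hq, hqlen⟩ := hc.exists_path_of_dist r b
  have := (hT.existsUnique_path r b).unique hp' hq
  have hlen2 : (p.concat hab).length = p.length + 1 := SimpleGraph.Walk.length_concat _ _
  rw [this] at hlen2
  omega

lemma pred_unique (hT : G.IsTree) {r a b c : V} (hb : G.Adj b a) (hcadj : G.Adj c a)
    (hdb : G.dist r b + 1 = G.dist r a) (hdc : G.dist r c + 1 = G.dist r a) : b = c := by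
  have hc := hT.isConnected
  obtain ⟨pb, hpb, hpblen⟩ := hc.exists_path_of_dist r b
  obtain ⟨pc, hpc, hpclen⟩ := hc.exists_path_of_dist r c
  have hapb : a ∉ pb.support := by
    intro ha
    have := mem_support_dist_le hc pb ha
    omega
  have hapc : a ∉ pc.support := by
    intro ha
    have := mem_support_dist_le hc pc ha
    omega
  have hp1 : (pb.concat hb).IsPath := by
    rw [← SimpleGraph.Walk.isPath_reverse_iff, SimpleGraph.Walk.reverse_concat]
    exact (hpb.reverse).cons (by simpa using hapb)
  have hp2 : (pc.concat hcadj).IsPath := by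
    rw [← SimpleGraph.Walk.isPath_reverse_iff, SimpleGraph.Walk.reverse_concat]
    exact (hpc.reverse).cons (by simpa using hapc)
  have heq := (hT.existsUnique_path r a).unique hp1 hp2
  have heq2 : (pb.concat hb).reverse = (pc.concat hcadj).reverse := by rw [heq]
  rw [SimpleGraph.Walk.reverse_concat, SimpleGraph.Walk.reverse_concat] at heq2
  have := congrArg (fun q => q.getVert 1) heq2
  simpa [SimpleGraph.Walk.getVert_cons] using this

section Subtree

variable {G : SimpleGraph V}

lemma mem_subtreeOf {r u x : V} : x ∈ subtreeOf G r u ↔ G.dist r x = G.dist r u + G.dist u x :=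
  Iff.rfl

lemma mem_subtree_self {r u : V} : u ∈ subtreeOf G r u := by
  simp [mem_subtreeOf, SimpleGraph.dist_self]

lemma root_not_mem (hc : G.Connected) {r u : V} (hu : u ≠ r) : r ∉ subtreeOf G r u := by
  intro h
  rw [mem_subtreeOf, SimpleGraph.dist_self] at h
  have h2 : G.dist r u = 0 := by omega
  exact hu ((hc.dist_eq_zero_iff.mp h2).symm)

lemma subtree_trans (hc : G.Connected) {r u a : V} (ha : a ∈ subtreeOf G r u) :
    subtreeOf G r a ⊆ subtreeOf G r u := by
  intro x hx
  rw [mem_subtreeOf] at *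
  have t1 : G.dist r x ≤ G.dist r u + G.dist u x := hc.dist_triangle
  have t2 : G.dist u x ≤ G.dist u a + G.dist a x := hc.dist_triangle
  omega

lemma child_mem {r u v : V} (h : IsParentOf G r u v) : v ∈ subtreeOf G r u := by
  rw [mem_subtreeOf, SimpleGraph.dist_eq_one_iff_adj.mpr h.1]
  exact h.2

lemma parent_not_mem {r u v : V} (h : IsParentOf G r v u) : v ∉ subtreeOf G r u := by
  intro hm
  rw [mem_subtreeOf, SimpleGraph.dist_eq_one_iff_adj.mpr h.1.symm] at hm
  have := h.2
  omega

lemma cut (hT : G.IsTree) {r u : V} {a b : V} (ha : a ∈ subtreeOf G r u) (hab : G.Adj a b)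
    (hb : b ∉ subtreeOf G r u) : a = u ∧ IsParentOf G r b a := by
  have hc := hT.isConnected
  rw [mem_subtreeOf] at ha
  rcases adj_dist_cases hT r hab with h1 | h1
  · exfalso
    apply hb
    apply subtree_trans hc (show a ∈ subtreeOf G r u from ha)
    rw [mem_subtreeOf, SimpleGraph.dist_eq_one_iff_adj.mpr hab]
    omega
  · have hau : a = u := by
      by_contra hne
      have hua : u ≠ a := fun he => hne he.symm
      obtain ⟨c, hca, hdc⟩ := exists_pred hc hua
      have hrc_le : G.dist r c ≤ G.dist r u + G.dist u c := hc.dist_triangle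
      have hge : G.dist r a ≤ G.dist r c + 1 := dist_adj_le hc hca r
      have hc_eq : G.dist r c + 1 = G.dist r a := by omega
      have hcb : b = c := pred_unique hT hab.symm hca h1 hc_eq
      apply hb
      rw [mem_subtreeOf]
      subst hcb
      omega
    exact ⟨hau, hab.symm, h1.symm⟩

lemma cut' (hT : G.IsTree) {r u v : V} (hv : IsParentOf G r v u) {a b : V}
    (ha : a ∈ subtreeOf G r u) (hab : G.Adj a b)
    (hb : b ∉ subtreeOf G r u) : a = u ∧ b = v := by
  obtain ⟨hau, hpar⟩ := cut hT ha hab hb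
  subst hau
  exact ⟨rfl, pred_unique hT hpar.1 hv.1 hpar.2.symm hv.2.symm⟩

end Subtree

section Lists

lemma takeWhile_ne_get {α : Type*} [DecidableEq α] :
    ∀ (l : List α), l.Nodup → ∀ (k : ℕ) (hk : k < l.length),
      l.takeWhile (fun f => decide (f ≠ l.get ⟨k, hk⟩)) = l.take k
  | [], _, k, hk => by simp at hk
  | a :: t, _, 0, _ => by simp
  | a :: t, hnd, k+1, hk => by
    have hnd' := List.nodup_cons.mp hnd
    have hk' : k < t.length := by simpa using hk
    have hmem : t.get ⟨k, hk'⟩ ∈ t := t.get_mem _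
    have hne : a ≠ t.get ⟨k, hk'⟩ := fun h => hnd'.1 (h ▸ hmem)
    have hget : (a :: t).get ⟨k+1, hk⟩ = t.get ⟨k, hk'⟩ := rfl
    rw [hget, List.take_succ_cons, List.takeWhile_cons]
    rw [if_pos (by simpa using hne)]
    have ih := takeWhile_ne_get t hnd'.2 k hk'
    simp only [ne_eq, decide_not] at ih ⊢
    rw [ih]

lemma sum_take_eq_range (lw : List ℕ) : ∀ (m : ℕ), m ≤ lw.length →
    (lw.take m).sum = ∑ k ∈ Finset.range m, lw.getD k 0
  | 0, _ => by simp
  | m+1, h => by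
    rw [List.sum_take_succ _ m (by omega), Finset.sum_range_succ,
      sum_take_eq_range lw m (by omega)]
    congr 1
    rw [List.getD_eq_getElem _ _ (by omega)]

end Lists

section Key

variable {G : SimpleGraph V}

lemma key [DecidableRel G.Adj] (hT : G.IsTree) (r : V)
    (π : List (V × V)) (hπ : IsEulerTour G r π)
    (Q : Set V) (marked : Set (V × V))
    (hmark₁ : ∀ q ∈ Q, ∃! x : V, (q, x) ∈ marked)
    (hmark₂ : ∀ e ∈ marked, e.1 ∈ Q ∧ G.Adj e.1 e.2)
    (w : V × V → ℕ)
    (hw₁ : ∀ e ∈ marked, w e = 1) (hw₀ : ∀ e ∉ marked, w e = 0)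
    (u v : V) (hu : u ≠ r) (hv : IsParentOf G r v u) :
    ∃ N, prefixSum w π (u, v) = prefixSum w π (v, u) + N ∧
      (N = 0 ↔ Q ∩ subtreeOf G r u = ∅) := by
  classical
  obtain ⟨hchain, hadj, hcount, hhead, hlast⟩ := hπ
  have hc := hT.isConnected
  have hvu_adj : G.Adj v u := hv.1
  set S := subtreeOf G r u with hSdef
  -- membership of the two directed edges
  have hmem_of_adj : ∀ e : V × V, G.Adj e.1 e.2 → e ∈ π := by
    intro e he
    by_contra hcm
    have h1 := hcount e he
    rw [List.count_eq_zero_of_not_mem hcm] at h1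
    omega
  have hmemvu : (v, u) ∈ π := hmem_of_adj _ hvu_adj
  have hmemuv : (u, v) ∈ π := hmem_of_adj _ hvu_adj.symm
  -- nodup
  have hcount_eq : ∀ (e : V × V),
      @List.count _ instBEqProd e π = @List.count _ instBEqOfDecidableEq e π := by
    intro e
    rw [@List.count_eq_countP _ instBEqProd, @List.count_eq_countP _ instBEqOfDecidableEq]
    apply List.countP_congr
    intro x _
    have h1 : (@BEq.beq _ instBEqProd x e = true) ↔ x = e :=
      @beq_iff_eq _ instBEqProd (by infer_instance) x e
    have h2 : (@BEq.beq _ instBEqOfDecidableEq x e = true) ↔ x = e :=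
      decide_eq_true_iff
    simp only [h1, h2]
  have hnodup : π.Nodup := by
    apply List.nodup_iff_count_le_one.mpr
    intro e
    by_cases he : e ∈ π
    · rw [hcount e (hadj e he)]
    · rw [List.count_eq_zero_of_not_mem ?_]
      · omega
      · exact he
  have hne0 : π ≠ [] := List.ne_nil_of_mem hmemvu
  have hn : 0 < π.length := List.length_pos_iff.mpr hne0
  have huniq : ∀ (k k' : ℕ) (hk : k < π.length) (hk' : k' < π.length),
      π.get ⟨k, hk⟩ = π.get ⟨k', hk'⟩ → k = k' := by
    intro k k' hk hk' h
    have := (hnodup.get_inj_iff).mp h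
    exact congrArg Fin.val this
  -- chain, head, last
  have hstep : ∀ (m : ℕ) (h : m + 1 < π.length),
      (π.get ⟨m, by omega⟩).2 = (π.get ⟨m + 1, h⟩).1 := by
    intro m h
    exact List.isChain_iff_getElem.mp hchain m (by omega)
  have hfirst : ∀ (hk : 0 < π.length), (π.get ⟨0, hk⟩).1 = r := by
    intro hk
    rw [List.head?_eq_head hne0] at hhead
    have h2 : π.head hne0 = π.get ⟨0, hk⟩ := by
      cases π with
      | nil => simp at hne0
      | cons a t => rfl
    simp only [Option.map_some] at hhead
    rw [← h2]
    exact Option.some_injective _ hhead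
  have hlast' : ∀ (hk : π.length - 1 < π.length), (π.get ⟨π.length - 1, hk⟩).2 = r := by
    intro hk
    rw [List.getLast?_eq_getLast hne0] at hlast
    rw [List.get_eq_getElem, ← List.getLast_eq_getElem hne0]
    simp only [Option.map_some] at hlast
    exact Option.some_injective _ hlast
  -- subtree facts
  have huS : u ∈ S := mem_subtree_self
  have hvS : v ∉ S := parent_not_mem hv
  have hrS : r ∉ S := root_not_mem hc hu
  -- indices
  obtain ⟨⟨i, hi⟩, hgi⟩ := List.mem_iff_get.mp hmemvu
  obtain ⟨⟨j, hj⟩, hgj⟩ := List.mem_iff_get.mp hmemuv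
  -- cut facts on tour edges
  have hCout : ∀ (k : ℕ) (hk : k < π.length),
      (π.get ⟨k, hk⟩).1 ∈ S → (π.get ⟨k, hk⟩).2 ∉ S → k = j := by
    intro k hk h1 h2
    have hadj' := hadj _ (π.get_mem ⟨k, hk⟩)
    obtain ⟨e1, e2⟩ := cut' hT hv h1 hadj' h2
    refine huniq k j hk hj ?_
    rw [hgj]
    exact Prod.ext e1 e2
  have hCin : ∀ (k : ℕ) (hk : k < π.length),
      (π.get ⟨k, hk⟩).1 ∉ S → (π.get ⟨k, hk⟩).2 ∈ S → k = i := by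
    intro k hk h1 h2
    have hadj' := hadj _ (π.get_mem ⟨k, hk⟩)
    obtain ⟨e1, e2⟩ := cut' hT hv h2 hadj'.symm h1
    refine huniq k i hk hi ?_
    rw [hgi]
    exact Prod.ext e2 e1
  -- claim A: before (and incl.) index i, tails are outside S
  have hA : ∀ (k : ℕ) (hk : k < π.length), k ≤ i → (π.get ⟨k, hk⟩).1 ∉ S := by
    intro k
    induction k with
    | zero =>
      intro hk _
      rw [hfirst hk]
      exact hrS
    | succ m ih =>
      intro hk hki
      have hm : m < π.length := by omega
      have hnotm : (π.get ⟨m, hm⟩).1 ∉ S := ih hm (by omega)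
      intro hmem
      have ht := hstep m hk
      have h2 : (π.get ⟨m, hm⟩).2 ∈ S := by rw [ht]; exact hmem
      have hmi : m = i := hCin m hm hnotm h2
      omega
  have hjS : (π.get ⟨j, hj⟩).1 ∈ S := by rw [hgj]; exact huS
  have hij : i < j := by
    by_contra h
    exact hA j hj (by omega) hjS
  -- main characterization
  have hB : ∀ (k : ℕ) (hk : k < π.length), ((π.get ⟨k, hk⟩).1 ∈ S ↔ (i < k ∧ k ≤ j)) := by
    intro k
    induction k with
    | zero =>
      intro hk
      rw [hfirst hk]
      simp [hrS]
    | succ m ih =>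
      intro hk
      have hm : m < π.length := by omega
      have ihm := ih hm
      have htr := hstep m hk
      by_cases hPm : (π.get ⟨m, hm⟩).1 ∈ S
      · obtain ⟨hmi, hmj⟩ := ihm.mp hPm
        by_cases hP1 : (π.get ⟨m + 1, hk⟩).1 ∈ S
        · have hmltj : m < j := by
            rcases Nat.lt_or_ge m j with h | h
            · exact h
            · exfalso
              have hmj' : m = j := by omega
              apply hvS
              have h3 : (π.get ⟨m, hm⟩).2 ∈ S := by rw [htr]; exact hP1
              have hfin : (⟨m, hm⟩ : Fin π.length) = ⟨j, hj⟩ := Fin.ext hmj'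
              rw [hfin, hgj] at h3
              exact h3
          constructor
          · intro _; exact ⟨by omega, by omega⟩
          · intro _; exact hP1
        · have hmj' : m = j := by
            apply hCout m hm hPm
            rw [htr]; exact hP1
          constructor
          · intro h3; exact absurd h3 hP1
          · rintro ⟨_, h4⟩; omega
      · have hnmij : ¬(i < m ∧ m ≤ j) := fun h => hPm (ihm.mpr h)
        by_cases hP1 : (π.get ⟨m + 1, hk⟩).1 ∈ S
        · have hmi : m = i := by
            apply hCin m hm hPm
            rw [htr]; exact hP1
          constructor
          · intro _; exact ⟨by omega, by omega⟩
          · intro _; exact hP1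
        · constructor
          · intro h3; exact absurd h3 hP1
          · rintro ⟨h3, h4⟩
            exfalso
            have hmi : m = i := by omega
            apply hP1
            rw [← htr]
            have hfin : (⟨m, hm⟩ : Fin π.length) = ⟨i, hi⟩ := Fin.ext hmi
            rw [hfin, hgi]
            exact huS
  -- prefix sums via range sums
  have hpre : ∀ (k : ℕ) (hk : k < π.length),
      prefixSum w π (π.get ⟨k, hk⟩) = ∑ kk ∈ Finset.range (k + 1), (π.map w).getD kk 0 := by
    intro k hk
    unfold prefixSum
    rw [takeWhile_ne_get π hnodup k hk, List.map_take,
      sum_take_eq_range (π.map w) k (by simp; omega)]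
    rw [Finset.sum_range_succ]
    congr 1
    rw [List.getD_eq_getElem _ _ (by simp; omega)]
    simp
  have h1 : prefixSum w π (u, v) = ∑ kk ∈ Finset.range (j + 1), (π.map w).getD kk 0 := by
    rw [← hgj]; exact hpre j hj
  have h2 : prefixSum w π (v, u) = ∑ kk ∈ Finset.range (i + 1), (π.map w).getD kk 0 := by
    rw [← hgi]; exact hpre i hi
  refine ⟨∑ k ∈ Finset.Ico (i + 1) (j + 1), (π.map w).getD k 0, ?_, ?_⟩
  · rw [h1, h2, Finset.range_eq_Ico, Finset.range_eq_Ico]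
    exact (Finset.sum_Ico_consecutive _ (Nat.zero_le _) (by omega : i + 1 ≤ j + 1)).symm
  · constructor
    · intro hN0
      rw [Set.eq_empty_iff_forall_notMem]
      rintro q ⟨hqQ, hqS⟩
      obtain ⟨x, hx, -⟩ := hmark₁ q hqQ
      have hadjq : G.Adj q x := (hmark₂ _ hx).2
      have hmemq : (q, x) ∈ π := hmem_of_adj _ hadjq
      obtain ⟨⟨k, hk⟩, hgk⟩ := List.mem_iff_get.mp hmemq
      have hkS : (π.get ⟨k, hk⟩).1 ∈ S := by rw [hgk]; exact hqS
      obtain ⟨hk1, hk2⟩ := (hB k hk).mp hkS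
      have hkin : k ∈ Finset.Ico (i + 1) (j + 1) := Finset.mem_Ico.mpr ⟨by omega, by omega⟩
      have := (Finset.sum_eq_zero_iff.mp hN0) k hkin
      rw [List.getD_eq_getElem _ _ (by simp; omega)] at this
      simp only [List.getElem_map] at this
      have hwq : w (q, x) = 1 := hw₁ _ hx
      rw [show π[k] = π.get ⟨k, hk⟩ from rfl, hgk] at this
      omega
    · intro hQ
      apply Finset.sum_eq_zero
      intro k hkIco
      rw [Finset.mem_Ico] at hkIco
      have hk : k < π.length := by omega
      have hkS : (π.get ⟨k, hk⟩).1 ∈ S := (hB k hk).mpr ⟨by omega, by omega⟩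
      have hnm : π.get ⟨k, hk⟩ ∉ marked := by
        intro hmk
        have hQ1 := (hmark₂ _ hmk).1
        have : (π.get ⟨k, hk⟩).1 ∈ Q ∩ S := ⟨hQ1, hkS⟩
        rw [hQ] at this
        exact this
      rw [List.getD_eq_getElem _ _ (by simp; omega)]
      simp only [List.getElem_map]
      exact hw₀ _ hnm

end Key

end EulerAux


/-- Euler tour characterization: the subtree of a non-root vertex `u` contains no
vertex of `Q` iff all prefix-sum differences with its neighbors vanish; and if the
subtree contains a vertex of `Q`, a neighbor `v` is the parent of `u` iff
`prefix((u,v)) − prefix((v,u)) > 0`. -/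
theorem euler_tour_prune_and_parent
    [Fintype V] (G : SimpleGraph V) [DecidableRel G.Adj] (hT : G.IsTree) (r : V)
    (π : List (V × V)) (hπ : IsEulerTour G r π)
    (Q : Set V) (marked : Set (V × V))
    (hmark₁ : ∀ q ∈ Q, ∃! v : V, (q, v) ∈ marked)
    (hmark₂ : ∀ e ∈ marked, e.1 ∈ Q ∧ G.Adj e.1 e.2)
    (w : V × V → ℕ)
    (hw₁ : ∀ e ∈ marked, w e = 1) (hw₀ : ∀ e ∉ marked, w e = 0)
    (u : V) (hu : u ≠ r) :
    (Q ∩ subtreeOf G r u = ∅ ↔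
      ∀ v : V, G.Adj u v → prefixSum w π (u, v) = prefixSum w π (v, u)) ∧
    ((Q ∩ subtreeOf G r u).Nonempty →
      ∀ v : V, G.Adj u v →
        (IsParentOf G r v u ↔ prefixSum w π (v, u) < prefixSum w π (u, v))) := by
  classical
  have hc := hT.isConnected
  obtain ⟨p, hpu, hpd⟩ := EulerAux.exists_pred hc (Ne.symm hu)
  have hp : IsParentOf G r p u := ⟨hpu, hpd.symm⟩
  obtain ⟨Np, hNp, hNp0⟩ := EulerAux.key hT r π hπ Q marked hmark₁ hmark₂ w hw₁ hw₀ u p hu hp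
  have hchild : ∀ v : V, G.Adj u v → G.dist r u + 1 = G.dist r v →
      ∃ Nv, prefixSum w π (v, u) = prefixSum w π (u, v) + Nv ∧
        (Nv = 0 ↔ Q ∩ subtreeOf G r v = ∅) := by
    intro v hv h1
    have hvr : v ≠ r := by
      intro h; subst h
      rw [SimpleGraph.dist_self] at h1
      omega
    exact EulerAux.key hT r π hπ Q marked hmark₁ hmark₂ w hw₁ hw₀ v u hvr ⟨hv, h1.symm⟩
  constructor
  · constructor
    · intro hempty v hv
      rcases EulerAux.adj_dist_cases hT r hv with h1 | h1
      · obtain ⟨Nv, hNv, hNv0⟩ := hchild v hv h1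
        have hsub : Q ∩ subtreeOf G r v = ∅ := by
          have hss : subtreeOf G r v ⊆ subtreeOf G r u :=
            EulerAux.subtree_trans hc (EulerAux.child_mem ⟨hv, h1.symm⟩)
          rw [Set.eq_empty_iff_forall_notMem]
          rintro x ⟨hx1, hx2⟩
          rw [Set.eq_empty_iff_forall_notMem] at hempty
          exact hempty x ⟨hx1, hss hx2⟩
        rw [hNv0.mpr hsub] at hNv
        omega
      · have hvp : v = p := EulerAux.pred_unique hT hv.symm hpu h1 hpd
        subst hvp
        rw [hNp0.mpr hempty] at hNp
        omega
    · intro hall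
      have h := hall p hpu.symm
      apply hNp0.mp
      omega
  · intro hne v hv
    constructor
    · intro hpar
      have hvp : v = p := EulerAux.pred_unique hT hpar.1 hpu hpar.2.symm hpd
      subst hvp
      have hNpne : Np ≠ 0 := by
        intro h0
        rw [hNp0.mp h0] at hne
        exact Set.not_nonempty_empty hne
      omega
    · intro hlt
      rcases EulerAux.adj_dist_cases hT r hv with h1 | h1
      · obtain ⟨Nv, hNv, -⟩ := hchild v hv h1
        exfalso
        omega
      · exact ⟨hv.symm, h1.symm⟩
end

section
/- Under the Euler tour setup with root r and marked set Q, for any vertex u and any neighbor v: if v is the parent of u then removing u leaves the component of v with |Q| − (prefix((u,v)) − prefix((v,u))) vertices of Q, and if v is a child of u then removing u leaves the component of v with prefix((v,u)) − prefix((u,v)) vertices of Q. -/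
variable {V : Type*} [DecidableEq V]

/-- The connected component of `v` in `T − u` (as a set of vertices of `T`),
where `v` is a neighbor of `u`. -/
def componentOf (G : SimpleGraph V) (u v : V) (hv : v ≠ u) : Set V :=
  Subtype.val '' (((G.induce {x | x ≠ u}).connectedComponentMk ⟨v, hv⟩).supp)

open SimpleGraph

set_option linter.unusedSectionVars false
set_option maxHeartbeats 1000000

section AuxGraph
variable {G : SimpleGraph V}


lemma path_length_eq_dist (hT : G.IsTree) {x y : V} (p : G.Walk x y) (hp : p.IsPath) :
    p.length = G.dist x y := by
  obtain ⟨q, hq, hql⟩ := Connected.exists_path_of_dist hT.isConnected x y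
  have := (hT.existsUnique_path x y).unique hp hq
  rw [this, hql]

/-- in a tree, u lies on a path x→y iff dist is additive -/
lemma mem_path_iff_dist (hT : G.IsTree) {x y u : V} (p : G.Walk x y) (hp : p.IsPath) :
    u ∈ p.support ↔ G.dist x y = G.dist x u + G.dist u y := by
  constructor
  · intro hu
    have h1 : (p.takeUntil u hu).length = G.dist x u :=
      path_length_eq_dist hT _ (hp.takeUntil hu)
    have h2 : (p.dropUntil u hu).length = G.dist u y :=
      path_length_eq_dist hT _ (hp.dropUntil hu)
    have := congrArg Walk.length (p.take_spec hu)
    rw [Walk.length_append, h1, h2] at this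
    rw [← path_length_eq_dist hT p hp]; omega
  · intro hd
    obtain ⟨p1, hp1, hl1⟩ := Connected.exists_path_of_dist hT.isConnected x u
    obtain ⟨p2, hp2, hl2⟩ := Connected.exists_path_of_dist hT.isConnected u y
    have hdisj : ∀ z, z ∈ p1.support → z ∈ p2.support → z = u := by
      intro z hz1 hz2
      have ha1 : (p1.takeUntil z hz1).length = G.dist x z :=
        path_length_eq_dist hT _ (hp1.takeUntil hz1)
      have ha2 : (p1.dropUntil z hz1).length = G.dist z u :=
        path_length_eq_dist hT _ (hp1.dropUntil hz1)
      have hb1 : (p2.takeUntil z hz2).length = G.dist u z :=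
        path_length_eq_dist hT _ (hp2.takeUntil hz2)
      have hb2 : (p2.dropUntil z hz2).length = G.dist z y :=
        path_length_eq_dist hT _ (hp2.dropUntil hz2)
      have e1 : G.dist x u = G.dist x z + G.dist z u := by
        have := congrArg Walk.length (p1.take_spec hz1)
        rw [Walk.length_append, ha1, ha2, hl1] at this; omega
      have e2 : G.dist u y = G.dist u z + G.dist z y := by
        have := congrArg Walk.length (p2.take_spec hz2)
        rw [Walk.length_append, hb1, hb2, hl2] at this; omega
      have tri : G.dist x y ≤ G.dist x z + G.dist z y :=
        Connected.dist_triangle hT.isConnected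
      have hcm : G.dist u z = G.dist z u := dist_comm ..
      have hzu : G.dist z u = 0 := by omega
      exact (Reachable.dist_eq_zero_iff (hT.isConnected z u)).mp hzu
    have hpath : (p1.append p2).IsPath := by
      rw [Walk.isPath_def, Walk.support_append, List.nodup_append]
      have h2 := hp2.support_nodup
      rw [Walk.support_eq_cons, List.nodup_cons] at h2
      refine ⟨hp1.support_nodup, h2.2, ?_⟩
      intro z hz1 z' hz2 hzz
      subst hzz
      have hz2' : z ∈ p2.support := by
        rw [Walk.support_eq_cons]; exact List.mem_cons_of_mem _ hz2
      have := hdisj z hz1 hz2'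
      subst this
      exact h2.1 hz2
    have hu' : u ∈ (p1.append p2).support := by
      rw [Walk.mem_support_append_iff]; left; exact Walk.end_mem_support p1
    have := (hT.existsUnique_path x y).unique hp hpath
    rw [this]; exact hu'

lemma walk_reachable_induce {s : Set V} : ∀ {a b : V} (p : G.Walk a b)
    (hp : ∀ x ∈ p.support, x ∈ s) (ha : a ∈ s) (hb : b ∈ s),
    (G.induce s).Reachable ⟨a, ha⟩ ⟨b, hb⟩
  | _, _, Walk.nil, _, _, _ => Reachable.refl _
  | a, b, Walk.cons h q, hp, ha, hb => by
    rename_i y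
    have hy : y ∈ s := hp y (by simp)
    refine Reachable.trans (Adj.reachable ?_) (walk_reachable_induce q (fun x hx => hp x (by simp [hx])) hy hb)
    exact h

lemma reachable_induce_iff {s : Set V} {a b : V} (ha : a ∈ s) (hb : b ∈ s) :
    (G.induce s).Reachable ⟨a, ha⟩ ⟨b, hb⟩ ↔
      ∃ p : G.Walk a b, ∀ x ∈ p.support, x ∈ s := by
  constructor
  · rintro ⟨q⟩
    refine ⟨q.map (Embedding.induce s).toHom, ?_⟩
    intro x hx
    erw [Walk.support_map] at hx
    obtain ⟨⟨y, hy⟩, _, rfl⟩ := List.mem_map.mp hx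
    exact hy
  · rintro ⟨p, hp⟩
    exact walk_reachable_induce p hp ha hb


lemma mem_componentOf_iff (hT : G.IsTree) {u v : V} (hv : v ≠ u) (x : V) :
    x ∈ componentOf G u v hv ↔ x ≠ u ∧ G.dist x v ≠ G.dist x u + G.dist u v := by
  obtain ⟨p, hp, -⟩ := (hT.existsUnique_path x v)
  have hchar : x ∈ componentOf G u v hv ↔ ∃ hx : x ≠ u,
      (G.induce {x | x ≠ u}).Reachable ⟨x, hx⟩ ⟨v, hv⟩ := by
    constructor
    · rintro ⟨⟨y, hy⟩, hmem, rfl⟩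
      exact ⟨hy, ConnectedComponent.eq.mp ((ConnectedComponent.mem_supp_iff _ _).mp hmem)⟩
    · rintro ⟨hx, hr⟩
      exact ⟨⟨x, hx⟩, (ConnectedComponent.mem_supp_iff _ _).mpr (ConnectedComponent.eq.mpr hr), rfl⟩
  rw [hchar]
  constructor
  · rintro ⟨hx, hr⟩
    refine ⟨hx, ?_⟩
    rw [reachable_induce_iff] at hr
    obtain ⟨q, hq⟩ := hr
    have hb : u ∉ q.bypass.support := fun h => (hq u (q.support_bypass_subset h)) rfl
    have : q.bypass = p := (hT.existsUnique_path x v).unique q.bypass_isPath hp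
    rw [this] at hb
    exact fun h => hb ((mem_path_iff_dist hT p hp).mpr h)
  · rintro ⟨hx, hd⟩
    refine ⟨hx, ?_⟩
    rw [reachable_induce_iff]
    refine ⟨p, fun z hz => ?_⟩
    intro hzu
    subst hzu
    exact hd ((mem_path_iff_dist hT p hp).mp hz)

lemma self_mem_componentOf (hT : G.IsTree) {u v : V} (hv : v ≠ u) :
    v ∈ componentOf G u v hv :=
  ⟨⟨v, hv⟩, (ConnectedComponent.mem_supp_iff _ _).mpr rfl, rfl⟩

lemma not_mem_componentOf (hT : G.IsTree) {u v : V} (hv : v ≠ u) :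
    u ∉ componentOf G u v hv := by
  rw [mem_componentOf_iff hT]
  rintro ⟨h, -⟩; exact h rfl

lemma compl_componentOf (hT : G.IsTree) {u v : V} (huv : G.Adj u v) :
    (componentOf G u v huv.symm.ne)ᶜ = componentOf G v u huv.ne := by
  have h1 : G.dist u v = 1 := dist_eq_one_iff_adj.mpr huv
  have h2 : G.dist v u = 1 := dist_eq_one_iff_adj.mpr huv.symm
  ext x
  simp only [Set.mem_compl_iff, mem_componentOf_iff hT, h1, h2]
  constructor
  · intro h
    by_cases hxu : x = u
    · subst hxu
      refine ⟨huv.ne, ?_⟩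
      rw [SimpleGraph.dist_self]
      omega
    · have hd : G.dist x v = G.dist x u + 1 := by
        by_contra hc; exact h ⟨hxu, hc⟩
      constructor
      · rintro rfl
        rw [SimpleGraph.dist_self] at hd
        omega
      · omega
  · rintro ⟨hxv, hd⟩ ⟨hxu, hd'⟩
    obtain ⟨p, hp, -⟩ := hT.existsUnique_path x v
    have hup : u ∉ p.support := by
      intro h
      exact hd' (by rw [(mem_path_iff_dist hT p hp).mp h, h1])
    have hp' : (p.concat huv.symm).IsPath := by
      rw [Walk.isPath_def, Walk.support_concat,
        List.nodup_append]
      exact ⟨hp.support_nodup, List.nodup_singleton u,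
        fun z hz z' hz' hzz => hup (by rw [List.mem_singleton.mp hz'] at hzz; rwa [hzz] at hz)⟩
    have hv' : v ∈ (p.concat huv.symm).support := by
      rw [Walk.support_concat]
      exact List.mem_append_left _ p.end_mem_support
    have := (mem_path_iff_dist hT _ hp').mp hv'
    rw [h2] at this
    omega

lemma crossing_eq (hT : G.IsTree) {u v x y : V} (huv : G.Adj u v) (hxy : G.Adj x y)
    (hx : x ∈ componentOf G u v huv.symm.ne) (hy : y ∉ componentOf G u v huv.symm.ne) :
    x = v ∧ y = u := by
  have hyu : y = u := by
    by_contra hyu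
    apply hy
    obtain ⟨⟨x', hx'⟩, hmem, hval⟩ := hx
    refine ⟨⟨y, hyu⟩, ?_, rfl⟩
    rw [ConnectedComponent.mem_supp_iff, ← (ConnectedComponent.mem_supp_iff _ _).mp hmem,
      ConnectedComponent.eq]
    apply Adj.reachable
    show G.Adj y x'
    cases hval
    exact hxy.symm
  subst hyu
  refine ⟨?_, rfl⟩
  -- x adjacent to u, x in component of v: show x = v via path uniqueness
  rw [mem_componentOf_iff hT] at hx
  obtain ⟨p, hp, -⟩ := hT.existsUnique_path x v
  have hup : y ∉ p.support := fun h => hx.2 ((mem_path_iff_dist hT p hp).mp h)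
  have hpath2 : (Walk.cons hxy.symm p).IsPath := hp.cons hup
  have hpath1 : (Walk.cons huv Walk.nil).IsPath := by
    simp [Walk.isPath_def, huv.ne]
  have heq := (hT.existsUnique_path y v).unique hpath2 hpath1
  have := congrArg Walk.support heq
  rw [Walk.support_cons, Walk.support_cons, Walk.support_nil,
    Walk.support_eq_cons p] at this
  simp at this
  have h := p.start_mem_support; rw [this, List.mem_singleton] at h; exact h



section ListLemmas

variable {α : Type*} [DecidableEq α]

lemma count_indep (i1 i2 : BEq α) (hl1 : @LawfulBEq α i1) (hl2 : @LawfulBEq α i2)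
    (a : α) (l : List α) : @List.count α i1 a l = @List.count α i2 a l := by
  induction l with
  | nil => rfl
  | cons b l ih =>
    rw [@List.count_cons α i1, @List.count_cons α i2, ih]
    by_cases hba : b = a
    · rw [if_pos (@beq_iff_eq α i1 hl1 b a |>.mpr hba),
        if_pos (@beq_iff_eq α i2 hl2 b a |>.mpr hba)]
    · rw [if_neg (fun hc => hba ((@beq_iff_eq α i1 hl1 b a).mp hc)),
        if_neg (fun hc => hba ((@beq_iff_eq α i2 hl2 b a).mp hc))]

lemma takeWhile_ne_eq_take (l : List α) (e : α) (he : e ∈ l) :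
    l.takeWhile (fun f => decide (f ≠ e)) = l.take (l.idxOf e) := by
  induction l with
  | nil => simp
  | cons a t ih =>
    by_cases h : a = e
    · subst h
      simp [List.takeWhile_cons, List.idxOf_cons_self]
    · have he' : e ∈ t := by
        rcases List.mem_cons.mp he with h' | h'
        · exact absurd h'.symm h
        · exact h'
      rw [List.idxOf_cons_ne _ (by exact h)]
      simp only [List.takeWhile_cons, decide_eq_true_eq]
      rw [if_pos h, List.take_succ_cons, ih he']

lemma sum_map_take (f : α → ℕ) (l : List α) (d : α) :
    ∀ m, m ≤ l.length → ((l.take m).map f).sum = ∑ k ∈ Finset.range m, f (l.getD k d) := by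
  intro m
  induction m with
  | zero => simp
  | succ m ih =>
    intro hm
    have hm' : m < l.length := hm
    rw [List.take_succ, List.map_append, List.sum_append, Finset.sum_range_succ,
      ← ih (le_of_lt hm'), List.getElem?_eq_getElem hm']
    simp [List.getD, List.getElem?_eq_getElem hm']

lemma prefixSum_eq (w : α → ℕ) (l : List α) (e : α) (he : e ∈ l) (d : α) :
    ((l.takeWhile (fun f => decide (f ≠ e))).map w).sum + w e
      = ∑ k ∈ Finset.range (l.idxOf e + 1), w (l.getD k d) := by
  have hi : l.idxOf e < l.length := List.idxOf_lt_length_iff.mpr he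
  rw [takeWhile_ne_eq_take l e he, sum_map_take w l d _ (le_of_lt hi), Finset.sum_range_succ]
  congr 1
  rw [List.getD_eq_getElem _ _ hi]
  exact congrArg w (by simpa using (List.idxOf_get (l := l) (a := e) hi).symm)

lemma exists_rise (t : ℕ → Prop) :
    ∀ l k, k ≤ l → ¬ t k → t l → ∃ m, k ≤ m ∧ m < l ∧ ¬ t m ∧ t (m + 1) := by
  intro l
  induction l with
  | zero => intro k hk h0 h1; interval_cases k; exact absurd h1 h0
  | succ l ih =>
    intro k hk h0 h1
    by_cases hkl : k = l + 1
    · subst hkl; exact absurd h1 h0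
    · have hk' : k ≤ l := by omega
      by_cases htl : t l
      · obtain ⟨m, h⟩ := ih k hk' h0 htl
        exact ⟨m, h.1, by omega, h.2.2⟩
      · exact ⟨l, hk', by omega, htl, h1⟩

end ListLemmas

/-- the state: position k of the tour lies in S -/
def tourState (π : List (V × V)) (S : Set V) (d : V × V) (k : ℕ) : Prop :=
  k < π.length ∧ (π.getD k d).1 ∈ S

section Tour

variable [DecidableRel G.Adj]

lemma tour_interval (r : V) (π : List (V × V)) (hπ : IsEulerTour G r π)
    (w : V × V → ℕ) (S : Set V) (a b : V) (hab : G.Adj a b)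
    (hbS : b ∈ S) (haS : a ∉ S) (hrS : r ∉ S)
    (hcross : ∀ x y : V, G.Adj x y → x ∈ S → y ∉ S → x = b ∧ y = a) :
    prefixSum w π (b, a) = prefixSum w π (a, b)
      + (π.map (Set.indicator {e : V × V | e.1 ∈ S} w)).sum := by
  obtain ⟨hchain, hadj, hcount, hhead, hlast⟩ := hπ
  have hl2 : @LawfulBEq (V × V) (instBEqOfDecidableEq : BEq (V × V)) := instLawfulBEq
  have hcount' : ∀ e : V × V, G.Adj e.1 e.2 →
      @List.count _ (instBEqOfDecidableEq : BEq (V × V)) e π = 1 := by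
    intro e h
    rw [count_indep _ _ hl2 inferInstance]
    exact hcount e h
  have hmem : ∀ e : V × V, G.Adj e.1 e.2 → e ∈ π := fun e h =>
    List.count_pos_iff.mp (by rw [hcount e h]; norm_num)
  letI instB : BEq (V × V) := (instBEqOfDecidableEq : BEq (V × V))
  have hnodup : π.Nodup := by
    rw [List.nodup_iff_count_le_one]
    intro e
    by_cases h : G.Adj e.1 e.2
    · rw [hcount' e h]
    · rw [List.count_eq_zero_of_not_mem (fun hc => h (hadj e hc))]
      norm_num
  have hmab : (a, b) ∈ π := hmem _ hab
  have hmba : (b, a) ∈ π := hmem _ hab.symm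
  set d : V × V := (a, b) with hd
  have hne : π ≠ [] := List.ne_nil_of_mem hmab
  have hgi0 : π.getD (π.idxOf (a, b)) d = (a, b) := by
    rw [List.getD_eq_getElem _ _ (List.idxOf_lt_length_iff.mpr hmab)]
    simpa [hd] using List.idxOf_get (l := π) (a := (a, b)) (List.idxOf_lt_length_iff.mpr hmab)
  have hgj0 : π.getD (π.idxOf (b, a)) d = (b, a) := by
    rw [List.getD_eq_getElem _ _ (List.idxOf_lt_length_iff.mpr hmba)]
    simpa [hd] using List.idxOf_get (l := π) (a := (b, a)) (List.idxOf_lt_length_iff.mpr hmba)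
  have huniq : ∀ k (hk : k < π.length) (e : V × V), e ∈ π → π.getD k d = e →
      k = π.idxOf e := by
    intro k hk e he hke
    have h2 : π.get ⟨k, hk⟩ = π.get ⟨π.idxOf e, List.idxOf_lt_length_iff.mpr he⟩ := by
      rw [List.idxOf_get, ← hke, List.getD_eq_getElem _ _ hk]
      simp
    have := (List.Nodup.get_inj_iff hnodup).mp h2
    simpa using this
  have hi0 : π.idxOf (a, b) < π.length := List.idxOf_lt_length_iff.mpr hmab
  have hj0 : π.idxOf (b, a) < π.length := List.idxOf_lt_length_iff.mpr hmba
  set i := π.idxOf (a, b) with hidef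
  set j := π.idxOf (b, a) with hjdef
  have hi : i < π.length := hi0
  have hj : j < π.length := hj0
  have hgi : π.getD i d = (a, b) := hgi0
  have hgj : π.getD j d = (b, a) := hgj0
  have hhead' : (π.getD 0 d).1 = r := by
    have h0 : 0 < π.length := List.length_pos_iff.mpr hne
    rw [List.head?_eq_head hne] at hhead
    rw [List.getD_eq_getElem _ _ h0, ← List.head_eq_getElem_zero hne]
    simpa using hhead
  have hlast' : (π.getD (π.length - 1) d).2 = r := by
    have hn1 : π.length - 1 < π.length := by omega
    rw [List.getLast?_eq_getLast hne] at hlast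
    rw [List.getD_eq_getElem _ _ hn1, ← List.getLast_eq_getElem hne]
    simpa using hlast
  have htrans : ∀ k, k + 1 ≤ π.length → ((π.getD k d).2 ∈ S ↔ tourState π S d (k + 1)) := by
    intro k hk1
    by_cases hk : k + 1 < π.length
    · have hc := List.isChain_iff_getElem.mp hchain k (by omega)
      show _ ↔ (k + 1 < π.length ∧ (π.getD (k+1) d).1 ∈ S)
      rw [List.getD_eq_getElem _ _ (by omega : k < π.length), List.getD_eq_getElem _ _ hk]
      rw [← hc]
      simp [hk]
    · have hkn : k = π.length - 1 := by omega
      subst hkn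
      rw [hlast']
      show _ ↔ (π.length - 1 + 1 < π.length ∧ _)
      constructor
      · intro h; exact absurd h hrS
      · intro h; omega
  have hrise : ∀ k, ¬ tourState π S d k → tourState π S d (k + 1) → k = i := by
    intro k hk hk1
    have hkn : k < π.length := by have := hk1.1; omega
    have h2 : (π.getD k d).2 ∈ S := (htrans k (by omega)).mpr hk1
    have h1 : (π.getD k d).1 ∉ S := fun hc => hk ⟨hkn, hc⟩
    have hadj' : G.Adj (π.getD k d).1 (π.getD k d).2 :=
      hadj _ (by rw [List.getD_eq_getElem _ _ hkn]; exact List.getElem_mem ..)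
    obtain ⟨hb', ha'⟩ := hcross _ _ hadj'.symm h2 h1
    have he : π.getD k d = (a, b) := Prod.ext ha' hb'
    rw [hidef]
    exact huniq k hkn (a, b) hmab he
  have hfall : ∀ k, tourState π S d k → ¬ tourState π S d (k + 1) → k = j := by
    intro k hk hk1
    have hkn : k < π.length := hk.1
    have h1 : (π.getD k d).1 ∈ S := hk.2
    have h2 : (π.getD k d).2 ∉ S := fun hc => hk1 ((htrans k (by omega)).mp hc)
    have hadj' : G.Adj (π.getD k d).1 (π.getD k d).2 :=
      hadj _ (by rw [List.getD_eq_getElem _ _ hkn]; exact List.getElem_mem ..)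
    obtain ⟨hb', ha'⟩ := hcross _ _ hadj' h1 h2
    have he : π.getD k d = (b, a) := Prod.ext hb' ha'
    rw [hjdef]
    exact huniq k hkn (b, a) hmba he
  have ht0 : ¬ tourState π S d 0 := by
    intro h
    have := h.2
    rw [hhead'] at this
    exact hrS this
  have hti : ¬ tourState π S d i := fun h => haS (by
    have h2 := h.2
    rw [hgi] at h2
    exact h2)
  have hti1 : tourState π S d (i + 1) := (htrans i (by omega)).mp (by rw [hgi]; exact hbS)
  have htj : tourState π S d j := ⟨hj, by rw [hgj]; exact hbS⟩
  have htj1 : ¬ tourState π S d (j + 1) := fun h => haS (by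
    have := (htrans j (by omega)).mpr h
    rw [hgj] at this
    exact this)
  have hij : i < j := by
    obtain ⟨m, hm0, hmj, hmt, hmt1⟩ :=
      exists_rise (tourState π S d) j 0 (Nat.zero_le _) ht0 htj
    have := hrise m hmt hmt1
    omega
  have hchar : ∀ k, tourState π S d k ↔ (i < k ∧ k ≤ j) := by
    intro k
    constructor
    · intro hk
      constructor
      · by_contra h
        push_neg at h
        have hki : k < i := lt_of_le_of_ne h (fun hc => hti (hc ▸ hk))
        obtain ⟨m, hm1, hm2, hm3, hm4⟩ :=
          exists_rise (fun x => ¬ tourState π S d x) i k (le_of_lt hki) (not_not_intro hk) hti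
        have := hfall m (not_not.mp hm3) hm4
        omega
      · by_contra h
        push_neg at h
        have hkj : j + 1 ≤ k := h
        have hne' : k ≠ j + 1 := fun hc => htj1 (hc ▸ hk)
        obtain ⟨m, hm1, hm2, hm3, hm4⟩ :=
          exists_rise (tourState π S d) k (j + 1) (by omega) htj1 hk
        have := hrise m hm3 hm4
        omega
    · rintro ⟨h1, h2⟩
      by_contra hk
      have hne' : k ≠ i + 1 := fun hc => hk (hc ▸ hti1)
      obtain ⟨m, hm1, hm2, hm3, hm4⟩ :=
        exists_rise (fun x => ¬ tourState π S d x) k (i + 1) (by omega) (not_not_intro hti1) hk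
      have := hfall m (not_not.mp hm3) hm4
      omega
  -- now the sums
  have hsum : (π.map (Set.indicator {e : V × V | e.1 ∈ S} w)).sum
      = ∑ k ∈ Finset.range π.length, Set.indicator {e : V × V | e.1 ∈ S} w (π.getD k d) := by
    have := sum_map_take (Set.indicator {e : V × V | e.1 ∈ S} w) π d π.length le_rfl
    rwa [List.take_length] at this
  have hterm : ∀ k ∈ Finset.range π.length,
      Set.indicator {e : V × V | e.1 ∈ S} w (π.getD k d)
        = if i < k ∧ k ≤ j then w (π.getD k d) else 0 := by
    intro k hk
    rw [Finset.mem_range] at hk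
    by_cases hkS : (π.getD k d).1 ∈ S
    · have htk : tourState π S d k := ⟨hk, hkS⟩
      rw [if_pos ((hchar k).mp htk)]
      exact Set.indicator_of_mem (show π.getD k d ∈ {e : V × V | e.1 ∈ S} from hkS) w
    · have htk : ¬ (i < k ∧ k ≤ j) := fun h => hkS (((hchar k).mpr h).2)
      rw [if_neg htk]
      exact Set.indicator_of_notMem (show π.getD k d ∉ {e : V × V | e.1 ∈ S} from hkS) w
  classical
  have hIco : (Finset.range π.length).filter (fun k => i < k ∧ k ≤ j) =
      Finset.Ico (i + 1) (j + 1) := by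
    ext k
    simp only [Finset.mem_filter, Finset.mem_range, Finset.mem_Ico]
    omega
  have hsum2 : (π.map (Set.indicator {e : V × V | e.1 ∈ S} w)).sum
      = ∑ k ∈ Finset.Ico (i + 1) (j + 1), w (π.getD k d) := by
    rw [hsum, Finset.sum_congr rfl hterm, ← Finset.sum_filter, hIco]
  have hpa : prefixSum w π (a, b) = ∑ k ∈ Finset.Ico 0 (i + 1), w (π.getD k d) := by
    rw [← Finset.range_eq_Ico]
    exact prefixSum_eq w π (a, b) hmab d
  have hpb : prefixSum w π (b, a) = ∑ k ∈ Finset.Ico 0 (j + 1), w (π.getD k d) := by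
    rw [← Finset.range_eq_Ico]
    exact prefixSum_eq w π (b, a) hmba d
  rw [hpa, hpb, hsum2, Finset.sum_Ico_consecutive _ (by omega) (by omega)]

end Tour

lemma tour_count [DecidableRel G.Adj] [Fintype V] (r : V) (π : List (V × V)) (hπ : IsEulerTour G r π)
    (Q : Set V) (marked : Set (V × V))
    (hmark₁ : ∀ q ∈ Q, ∃! v : V, (q, v) ∈ marked)
    (hmark₂ : ∀ e ∈ marked, e.1 ∈ Q ∧ G.Adj e.1 e.2)
    (w : V × V → ℕ)
    (hw₁ : ∀ e ∈ marked, w e = 1) (hw₀ : ∀ e ∉ marked, w e = 0)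
    (S : Set V) :
    (π.map (Set.indicator {e : V × V | e.1 ∈ S} w)).sum = (Q ∩ S).ncard := by
  classical
  obtain ⟨hchain, hadj, hcount, hhead, hlast⟩ := hπ
  have hl2 : @LawfulBEq (V × V) (instBEqOfDecidableEq : BEq (V × V)) := instLawfulBEq
  have hcount' : ∀ e : V × V, G.Adj e.1 e.2 →
      @List.count _ (instBEqOfDecidableEq : BEq (V × V)) e π = 1 := by
    intro e h
    rw [count_indep _ _ hl2 inferInstance]
    exact hcount e h
  have hmem : ∀ e : V × V, G.Adj e.1 e.2 → e ∈ π := fun e h =>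
    List.count_pos_iff.mp (by rw [hcount e h]; norm_num)
  letI instB : BEq (V × V) := (instBEqOfDecidableEq : BEq (V × V))
  have hnodup : π.Nodup := by
    rw [List.nodup_iff_count_le_one]
    intro e
    by_cases h : G.Adj e.1 e.2
    · rw [hcount' e h]
    · rw [List.count_eq_zero_of_not_mem (fun hc => h (hadj e hc))]
      norm_num
  set f := Set.indicator {e : V × V | e.1 ∈ S} w with hf
  have h1 : (π.map f).sum = ∑ e ∈ π.toFinset, f e := by
    rw [Finset.sum_list_map_count]
    apply Finset.sum_congr rfl
    intro e he
    rw [List.mem_toFinset] at he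
    rw [hcount' e (hadj e he), one_smul]
  set g : V × V → ℕ := fun e => if e ∈ marked ∧ e.1 ∈ S then 1 else 0 with hg
  have hfg : ∀ e ∈ π.toFinset, f e = g e := by
    intro e he
    rw [List.mem_toFinset] at he
    rw [hf, hg]
    by_cases hS : e.1 ∈ S
    · rw [Set.indicator_of_mem (show e ∈ {e : V × V | e.1 ∈ S} from hS)]
      by_cases hm : e ∈ marked
      · simp only [hm, hS, and_self, if_true]
        exact hw₁ e hm
      · simp only [hm, false_and, if_false]
        exact hw₀ e hm
    · rw [Set.indicator_of_notMem (show e ∉ {e : V × V | e.1 ∈ S} from hS)]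
      simp [hS]
  have h2 : ∑ e ∈ π.toFinset, f e = ∑ e ∈ (Finset.univ : Finset (V × V)), g e := by
    rw [Finset.sum_congr rfl hfg]
    apply Finset.sum_subset (Finset.subset_univ _)
    intro e _ he
    rw [List.mem_toFinset] at he
    by_cases hm : e ∈ marked ∧ e.1 ∈ S
    · exact absurd (hmem e (hmark₂ e hm.1).2) he
    · simp only [hg, if_neg hm]
  have h3 : ∑ e ∈ (Finset.univ : Finset (V × V)), g e
      = (Finset.univ.filter (fun e : V × V => e ∈ marked ∧ e.1 ∈ S)).card := by
    rw [Finset.card_filter]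
  have h4 : (Finset.univ.filter (fun e : V × V => e ∈ marked ∧ e.1 ∈ S)).card
      = (Q ∩ S).ncard := by
    rw [Set.ncard_eq_toFinset_card']
    apply Finset.card_bij (fun e _ => e.1)
    · intro e he
      rw [Finset.mem_filter] at he
      rw [Set.mem_toFinset]
      exact ⟨(hmark₂ e he.2.1).1, he.2.2⟩
    · intro e he e' he' heq
      rw [Finset.mem_filter] at he he'
      have hq : e.1 ∈ Q := (hmark₂ e he.2.1).1
      obtain ⟨v0, hv0, huniq⟩ := hmark₁ e.1 hq
      have h5 : e.2 = v0 := huniq e.2 (by rw [← Prod.mk.eta (p := e)] at he; exact he.2.1)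
      have h6 : e'.2 = v0 := by
        apply huniq
        rw [heq]
        rw [← Prod.mk.eta (p := e')] at he'
        exact he'.2.1
      exact Prod.ext heq (h5.trans h6.symm)
    · intro q hq
      rw [Set.mem_toFinset] at hq
      obtain ⟨v0, hv0, -⟩ := hmark₁ q hq.1
      refine ⟨(q, v0), ?_, rfl⟩
      rw [Finset.mem_filter]
      exact ⟨Finset.mem_univ _, hv0, hq.2⟩
  rw [h1, h2, h3, h4]

end AuxGraph

/-- Euler tour component counting: for a vertex `u` and a neighbor `v`, after removing
`u`, the component of `v` contains `|Q| − (prefix((u,v)) − prefix((v,u)))` vertices of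
`Q` if `v` is the parent of `u`, and `prefix((v,u)) − prefix((u,v))` vertices of `Q`
if `v` is a child of `u`. -/
theorem euler_tour_component_count
    [Fintype V] (G : SimpleGraph V) [DecidableRel G.Adj] (hT : G.IsTree) (r : V)
    (π : List (V × V)) (hπ : IsEulerTour G r π)
    (Q : Set V) (marked : Set (V × V))
    (hmark₁ : ∀ q ∈ Q, ∃! v : V, (q, v) ∈ marked)
    (hmark₂ : ∀ e ∈ marked, e.1 ∈ Q ∧ G.Adj e.1 e.2)
    (w : V × V → ℕ)
    (hw₁ : ∀ e ∈ marked, w e = 1) (hw₀ : ∀ e ∉ marked, w e = 0)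
    (u v : V) (huv : G.Adj u v) :
    (IsParentOf G r v u →
      ((Q ∩ componentOf G u v huv.symm.ne).ncard : ℤ) =
        (Q.ncard : ℤ) -
          ((prefixSum w π (u, v) : ℤ) - (prefixSum w π (v, u) : ℤ))) ∧
    (IsParentOf G r u v →
      ((Q ∩ componentOf G u v huv.symm.ne).ncard : ℤ) =
        (prefixSum w π (v, u) : ℤ) - (prefixSum w π (u, v) : ℤ)) := by
  classical
  have h1 : G.dist u v = 1 := SimpleGraph.dist_eq_one_iff_adj.mpr huv
  have h2 : G.dist v u = 1 := SimpleGraph.dist_eq_one_iff_adj.mpr huv.symm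
  constructor
  · -- v is the parent of u
    intro hpar
    set S' : Set V := componentOf G v u huv.ne with hS'
    have hrS' : r ∉ S' := by
      rw [hS', mem_componentOf_iff hT]
      rintro ⟨hru, hd⟩
      exact hd (by rw [h2]; exact hpar.2)
    have hmemu : u ∈ S' := self_mem_componentOf hT _
    have hmemv : v ∉ S' := not_mem_componentOf hT _
    have hcross' : ∀ x y : V, G.Adj x y → x ∈ S' → y ∉ S' → x = u ∧ y = v :=
      fun x y hxy hx hy => crossing_eq hT huv.symm hxy hx hy
    have hkey := tour_interval r π hπ w S' v u huv.symm hmemu hmemv hrS' hcross'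
    have hcnt := tour_count r π hπ Q marked hmark₁ hmark₂ w hw₁ hw₀ S'
    rw [hcnt] at hkey
    have hcompl : (componentOf G u v huv.symm.ne)ᶜ = S' := compl_componentOf hT huv
    have hQsplit : (Q ∩ componentOf G u v huv.symm.ne).ncard + (Q ∩ S').ncard
        = Q.ncard := by
      have hdiff : Q ∩ S' = Q \ (componentOf G u v huv.symm.ne) := by
        rw [Set.diff_eq, hcompl]
      rw [hdiff]
      exact Set.ncard_inter_add_ncard_diff_eq_ncard Q _ (Set.toFinite Q)
    have h3 := hkey
    omega
  · -- v is a child of u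
    intro hpar
    set S : Set V := componentOf G u v huv.symm.ne with hS
    have hrS : r ∉ S := by
      rw [hS, mem_componentOf_iff hT]
      rintro ⟨hru, hd⟩
      exact hd (by rw [h1]; exact hpar.2)
    have hmemv : v ∈ S := self_mem_componentOf hT _
    have hmemu : u ∉ S := not_mem_componentOf hT _
    have hcross : ∀ x y : V, G.Adj x y → x ∈ S → y ∉ S → x = v ∧ y = u :=
      fun x y hxy hx hy => crossing_eq hT huv hxy hx hy
    have hkey := tour_interval r π hπ w S u v huv hmemv hmemu hrS hcross
    have hcnt := tour_count r π hπ Q marked hmark₁ hmark₂ w hw₁ hw₀ S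
    rw [hcnt] at hkey
    omega
end
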